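/- (Derivatives of the generating function, eq. (37).) For every real number x, every i ≥ 0 and every n ≥ 0, the n-th Taylor coefficient at t = 0 of the i-th derivative (d/dt)^i (1 - 2tx + t²)^{-1/2} equals (n+i)_i · p_{n+i}(x), where p_k is the k-th Legendre polynomial. -/

import Mathlib

/-!
For `g t = (1 - 2tx + t²)^(-1/2)`, both `n ↦ g⁽ⁿ⁾(0) / n!` and `n ↦ p_n(x)` satisfy Bonnet's
recursion `(n + 2) p_{n+2} = (2n + 3) x p_{n+1} - (n + 1) p_n` with initial values `1` and `x`.
For `g` it is the `(n + 1)`-st derivative at `t = 0` of the differential equation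
`(1 - 2tx + t²) g' = (x - t) g`, expanded by Leibniz' rule. For `Q_n = D^n (X² - 1)^n = 2^n n! p_n`
it follows from `Q_{n+1} = 2 (X² - 1) Q_n' + 2 (n + 1) X Q_n` and
`Q_{n+1}' = 2 (n + 1) (X Q_n' + (n + 1) Q_n)`, obtained by expanding `D^(n+1)` and `D^(n+2)` of
`(X² - 1)^(n+1)` with Leibniz' rule, using `D (X² - 1)^(n+1) = 2 (n + 1) X (X² - 1)^n`.
Finally the `n`-th derivative of `g⁽ⁱ⁾` is `g⁽ⁿ⁺ⁱ⁾`, and `(n + i)! / n! = (n + i)_i`.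
-/

/-- The `n`-th Legendre polynomial, given by Rodrigues' formula
`p_n(x) = (1/(2^n n!))·(d/dx)^n [(x²-1)^n]`. -/
noncomputable def legendreP (n : ℕ) (x : ℝ) : ℝ :=
  (1 / (2 ^ n * (Nat.factorial n : ℝ))) * iteratedDeriv n (fun y : ℝ => (y ^ 2 - 1) ^ n) x

open Polynomial

namespace Polynomial

variable {R : Type*} [CommRing R]

theorem derivative_X_sq_sub_one_pow_succ (n : ℕ) :
    derivative (((X : R[X]) ^ 2 - 1) ^ (n + 1)) = (2 * (n + 1)) • ((X ^ 2 - 1) ^ n * X) := by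
  rw [derivative_pow_succ, derivative_sub, derivative_X_sq, derivative_one, sub_zero, nsmul_eq_mul]
  simp only [map_add, map_natCast, map_one, map_ofNat, Nat.cast_mul, Nat.cast_add, Nat.cast_one,
    Nat.cast_ofNat]
  ring

-- The truncated `m - 1` and `m - 2` only occur with coefficients that vanish when they truncate.
theorem iterate_derivative_X_sq_sub_one_mul (m : ℕ) (p : R[X]) :
    derivative^[m] ((X ^ 2 - 1) * p) = (X ^ 2 - 1) * derivative^[m] p
      + 2 * (m : R[X]) * X * derivative^[m - 1] p
      + (m : R[X]) * ((m - 1 : ℕ) : R[X]) * derivative^[m - 2] p := by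
  have h : (X ^ 2 - 1) * p = p * X * X - p := by ring
  rw [h, iterate_derivative_sub, iterate_derivative_mul_X, iterate_derivative_mul_X,
    iterate_derivative_mul_X, Nat.sub_sub]
  simp only [nsmul_eq_mul]
  ring

noncomputable def rodrigues (n : ℕ) : R[X] := derivative^[n] ((X ^ 2 - 1) ^ n)

theorem rodrigues_succ (n : ℕ) :
    rodrigues (n + 1) = 2 * (X ^ 2 - 1) * derivative (rodrigues n : R[X])
      + 2 * ((n : R[X]) + 1) * X * rodrigues n := by
  have h₁ : rodrigues (n + 1) = 2 * ((n : R[X]) + 1) *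
      (X * rodrigues n + (n : R[X]) * derivative^[n - 1] (((X : R[X]) ^ 2 - 1) ^ n)) := by
    unfold rodrigues
    rw [Function.iterate_succ_apply, derivative_X_sq_sub_one_pow_succ, iterate_derivative_smul,
      iterate_derivative_mul_X]
    simp only [nsmul_eq_mul]
    push_cast
    ring
  have h₂ : rodrigues (n + 1) = (X ^ 2 - 1) * derivative (rodrigues n : R[X])
      + 2 * ((n : R[X]) + 1) * X * rodrigues n
      + ((n : R[X]) + 1) * (n : R[X]) * derivative^[n - 1] (((X : R[X]) ^ 2 - 1) ^ n) := by
    unfold rodrigues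
    rw [pow_succ', iterate_derivative_X_sq_sub_one_mul, Function.iterate_succ_apply',
      show n + 1 - 2 = n - 1 by omega, Nat.add_sub_cancel]
    push_cast
    ring
  linear_combination 2 * h₂ - h₁

theorem derivative_rodrigues_succ (n : ℕ) :
    derivative (rodrigues (n + 1) : R[X])
      = 2 * ((n : R[X]) + 1) * (X * derivative (rodrigues n) + ((n : R[X]) + 1) * rodrigues n) := by
  unfold rodrigues
  rw [← Function.iterate_succ_apply' derivative, Function.iterate_succ_apply,
    derivative_X_sq_sub_one_pow_succ, iterate_derivative_smul, iterate_derivative_mul_X,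
    Nat.add_sub_cancel, Function.iterate_succ_apply']
  simp only [nsmul_eq_mul]
  push_cast
  ring

theorem rodrigues_add_two (n : ℕ) :
    rodrigues (n + 2) = (4 * (n : R[X]) + 6) * X * rodrigues (n + 1)
      - 4 * ((n : R[X]) + 1) ^ 2 * rodrigues n := by
  have h₁ := rodrigues_succ (R := R) (n + 1)
  have h₂ := derivative_rodrigues_succ (R := R) n
  have h₃ := rodrigues_succ (R := R) n
  push_cast at h₁ ⊢
  linear_combination h₁ + 2 * (X ^ 2 - 1) * h₂ - 2 * ((n : R[X]) + 1) * X * h₃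

end Polynomial

theorem Polynomial.iteratedDeriv_eval {𝕜 : Type*} [NontriviallyNormedField 𝕜] (p : 𝕜[X]) (n : ℕ) :
    iteratedDeriv n (fun x => p.eval x) = fun x => (derivative^[n] p).eval x := by
  induction n generalizing p with
  | zero => rfl
  | succ n ih =>
    have hd : _root_.deriv (fun x => p.eval x) = fun x => (derivative p).eval x := by
      ext x
      exact p.deriv
    rw [iteratedDeriv_succ', hd, ih, Function.iterate_succ_apply]

-- For `n = 0` the last term vanishes, so the truncated `n - 1` is harmless.
theorem iteratedDeriv_succ_quadratic_mul {𝕜 : Type*} [NontriviallyNormedField 𝕜] {f : 𝕜 → 𝕜}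
    {t : 𝕜} (a b c : 𝕜) {n : ℕ} (hf : ContDiffAt 𝕜 (n + 1) f t) :
    iteratedDeriv (n + 1) (fun s => (a * s ^ 2 + b * s + c) * f s) t
      = (a * t ^ 2 + b * t + c) * iteratedDeriv (n + 1) f t
        + (n + 1) * (2 * a * t + b) * iteratedDeriv n f t
        + (n + 1) * n * a * iteratedDeriv (n - 1) f t := by
  set q : 𝕜[X] := C a * X ^ 2 + C b * X + C c
  have hq₀ (s : 𝕜) : q.eval s = a * s ^ 2 + b * s + c := by simp [q]
  have hq₁ : derivative q = C (2 * a) * X + C b := by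
    simp only [q, derivative_add, derivative_C_mul_X_pow, derivative_C_mul_X, derivative_C, C_mul]
    norm_num
    ring
  have hq₃ (i : ℕ) : derivative^[i + 3] q = 0 :=
    iterate_derivative_eq_zero (natDegree_quadratic_le.trans_lt (by omega))
  rw [iteratedDeriv_fun_mul (n := n + 1) (by fun_prop) hf]
  simp only [← hq₀, iteratedDeriv_eval]
  rw [Finset.sum_range_succ', Finset.sum_range_succ']
  rcases n with _ | n
  · simp only [Finset.sum_range_zero, zero_add, Function.iterate_succ, Function.comp_apply,
      Function.iterate_zero, id_eq, Nat.choose_self, Nat.choose_zero_right, Nat.sub_self,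
      Nat.sub_zero, Nat.zero_sub, iteratedDeriv_zero, hq₀, hq₁, eval_add, eval_mul, eval_C, eval_X]
    push_cast
    ring
  · rw [Finset.sum_range_succ', Finset.sum_eq_zero fun i _ => by simp [hq₃]]
    have hchoose : ((n + 2).choose 2 : 𝕜) * 2 = (n + 2) * (n + 1) := by
      have h : (n + 2).choose 2 * 2 = (n + 2) * (n + 1) := by
        simpa using (Nat.add_one_mul_choose_eq (n + 1) 1).symm
      simpa using congrArg (Nat.cast : ℕ → 𝕜) h
    simp only [zero_add, Function.iterate_succ, Function.comp_apply, Function.iterate_zero, id_eq,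
      Nat.choose_zero_right, Nat.choose_one_right, Nat.add_sub_cancel, Nat.sub_zero, hq₀, hq₁,
      derivative_add, derivative_C_mul_X, derivative_C, add_zero, eval_add, eval_mul, eval_C, eval_X]
    push_cast
    linear_combination a * iteratedDeriv n f t * hchoose

theorem iteratedDeriv_iteratedDeriv {𝕜 F : Type*} [NontriviallyNormedField 𝕜]
    [NormedAddCommGroup F] [NormedSpace 𝕜 F] (m n : ℕ) (f : 𝕜 → F) :
    iteratedDeriv m (iteratedDeriv n f) = iteratedDeriv (m + n) f := by
  simp only [iteratedDeriv_eq_iterate, Function.iterate_add]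
  rfl

theorem eval_rodrigues (n : ℕ) (x : ℝ) :
    (rodrigues n).eval x = 2 ^ n * n.factorial * legendreP n x := by
  have h : (fun y : ℝ => (y ^ 2 - 1) ^ n) = fun y => (((X : ℝ[X]) ^ 2 - 1) ^ n).eval y := by
    simp
  rw [legendreP, h, iteratedDeriv_eval, rodrigues]
  field_simp

theorem legendreP_zero (x : ℝ) : legendreP 0 x = 1 := by
  simp [legendreP]

theorem legendreP_one (x : ℝ) : legendreP 1 x = x := by
  simp [legendreP]

theorem legendreP_add_two (n : ℕ) (x : ℝ) :
    (n + 2) * legendreP (n + 2) x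
      = (2 * n + 3) * x * legendreP (n + 1) x - (n + 1) * legendreP n x := by
  have h := congrArg (eval x) (rodrigues_add_two (R := ℝ) n)
  simp only [eval_rodrigues, eval_sub, eval_mul, eval_add, eval_pow, eval_X, eval_one,
    eval_natCast, eval_ofNat, Nat.factorial_succ] at h
  apply mul_left_cancel₀ (show (2 : ℝ) ^ (n + 2) * (n + 1) * n.factorial ≠ 0 by positivity)
  push_cast at h
  linear_combination h

noncomputable def legendreGenFun (x t : ℝ) : ℝ := (1 - 2 * t * x + t ^ 2) ^ (-(1 : ℝ) / 2)

theorem contDiffAt_legendreGenFun {n : WithTop ℕ∞} (x : ℝ) {t : ℝ}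
    (ht : 1 - 2 * t * x + t ^ 2 ≠ 0) : ContDiffAt ℝ n (legendreGenFun x) t :=
  (Real.contDiffAt_rpow_const_of_ne ht).comp t (f := fun s => 1 - 2 * s * x + s ^ 2) (by fun_prop)

theorem legendreGenFun_ode (x : ℝ) {t : ℝ} (ht : 1 - 2 * t * x + t ^ 2 ≠ 0) :
    (1 - 2 * t * x + t ^ 2) * deriv (legendreGenFun x) t = (x - t) * legendreGenFun x t := by
  have hq : HasDerivAt (fun s => 1 - 2 * s * x + s ^ 2) (2 * t - 2 * x) t :=
    ((((hasDerivAt_id' t).const_mul 2).mul_const x).const_sub 1 |>.fun_add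
      (hasDerivAt_pow 2 t)).congr_deriv (by norm_num; ring)
  have hg : HasDerivAt (legendreGenFun x) _ t := hq.rpow_const (p := -(1 : ℝ) / 2) (Or.inl ht)
  rw [hg.deriv, legendreGenFun,
    show -(1 : ℝ) / 2 = -(1 : ℝ) / 2 - 1 + 1 by ring, Real.rpow_add_one ht]
  ring_nf

theorem iteratedDeriv_legendreGenFun_add_two (x : ℝ) (n : ℕ) :
    iteratedDeriv (n + 2) (legendreGenFun x) 0
      = (2 * n + 3) * x * iteratedDeriv (n + 1) (legendreGenFun x) 0
        - (n + 1) ^ 2 * iteratedDeriv n (legendreGenFun x) 0 := by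
  have hq : ∀ᶠ s in nhds (0 : ℝ), 1 - 2 * s * x + s ^ 2 ≠ 0 :=
    (by fun_prop : Continuous fun s : ℝ => 1 - 2 * s * x + s ^ 2).continuousAt.eventually_ne
      (by norm_num)
  have hode : (fun s => (1 * s ^ 2 + (-2 * x) * s + 1) * deriv (legendreGenFun x) s)
      =ᶠ[nhds 0] fun s => (0 * s ^ 2 + (-1) * s + x) * legendreGenFun x s := by
    filter_upwards [hq] with s hs
    linear_combination legendreGenFun_ode x hs
  have h := hode.iteratedDeriv_eq (n + 1)
  have hg : ∀ {m : WithTop ℕ∞}, ContDiffAt ℝ m (legendreGenFun x) 0 :=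
    contDiffAt_legendreGenFun x (by norm_num)
  rw [iteratedDeriv_succ_quadratic_mul _ _ _ (hg.derivWithin le_rfl),
    iteratedDeriv_succ_quadratic_mul _ _ _ hg] at h
  simp only [← iteratedDeriv_succ'] at h
  rcases n with _ | n
  · norm_num at h ⊢
    linear_combination h
  · rw [Nat.add_sub_cancel] at h
    push_cast at h ⊢
    linear_combination h

theorem iteratedDeriv_legendreGenFun_zero (x : ℝ) (n : ℕ) :
    iteratedDeriv n (legendreGenFun x) 0 = n.factorial * legendreP n x := by
  have hg₀ : legendreGenFun x 0 = 1 := by simp [legendreGenFun]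
  induction n using Nat.twoStepInduction with
  | zero => simp [hg₀, legendreP_zero]
  | one =>
    have h := legendreGenFun_ode x (t := 0) (by norm_num)
    rw [hg₀] at h
    rw [iteratedDeriv_one, legendreP_one, Nat.factorial_one, Nat.cast_one, one_mul]
    linear_combination h
  | more n ih₁ ih₂ =>
    rw [iteratedDeriv_legendreGenFun_add_two, ih₁, ih₂, Nat.factorial_succ (n + 1),
      Nat.factorial_succ n]
    push_cast
    linear_combination (-(n + 1) * (n.factorial : ℝ)) * legendreP_add_two n x

/-- Derivatives of the generating function (eq. (37)): for every real `x` and all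
`i, n ≥ 0`, the `n`-th Taylor coefficient at `t = 0` of
`(d/dt)^i (1 - 2tx + t²)^(-1/2)` equals `(n+i)_i · p_{n+i}(x)`. -/
theorem legendre_generating_function_deriv (x : ℝ) (i n : ℕ) :
    iteratedDeriv n
        (iteratedDeriv i (fun t : ℝ => (1 - 2 * t * x + t ^ 2) ^ (-(1 : ℝ) / 2))) 0
        / (Nat.factorial n : ℝ)
      = (Nat.descFactorial (n + i) i : ℝ) * legendreP (n + i) x := by
  change iteratedDeriv n (iteratedDeriv i (legendreGenFun x)) 0 / _ = _
  rw [iteratedDeriv_iteratedDeriv, iteratedDeriv_legendreGenFun_zero,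
    ← Nat.factorial_mul_descFactorial (Nat.le_add_left i n), Nat.add_sub_cancel]
  push_cast
  field_simp
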